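/- Hölder step for root fidelity: for positive semidefinite complex matrices ρ and γ on a finite nonempty index type ι and any orthogonal projection P (a Hermitian idempotent complex matrix), ‖√ρ · P · √γ‖₁ ≤ √(tr(Pρ)) · √(tr(Pγ)), where tr(Pρ) and tr(Pγ) are nonnegative reals. -/

import Mathlib

open Matrix
open scoped ComplexOrder

/-- Square root of a matrix: the unique positive semidefinite square root when the
matrix is positive semidefinite, and (junk value) `0` otherwise. -/
noncomputable def msqrt {ι : Type*} [Fintype ι] [DecidableEq ι] (M : Matrix ι ι ℂ) :
    Matrix ι ι ℂ :=
  open scoped Classical in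
  if h : M.PosSemidef then
    (h.1.eigenvectorUnitary : Matrix ι ι ℂ) * diagonal ((↑) ∘ (√·) ∘ h.1.eigenvalues) *
      (star (h.1.eigenvectorUnitary : Matrix ι ι ℂ))
  else 0

/-- Trace norm `‖A‖₁ = trace √(Aᴴ A)`. -/
noncomputable def traceNorm {ι : Type*} [Fintype ι] [DecidableEq ι] (A : Matrix ι ι ℂ) : ℝ :=
  ((msqrt (Aᴴ * A)).trace).re

lemma msqrt_psd {ι : Type*} [Fintype ι] [DecidableEq ι] {M : Matrix ι ι ℂ}
    (h : M.PosSemidef) : (msqrt M).PosSemidef := by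
  rw [msqrt, dif_pos h, Matrix.star_eq_conjTranspose]
  refine (posSemidef_diagonal_iff.mpr fun i => ?_).mul_mul_conjTranspose_same _
  simp only [Function.comp_apply]
  exact Complex.zero_le_real.mpr (Real.sqrt_nonneg _)

lemma msqrt_mul_self {ι : Type*} [Fintype ι] [DecidableEq ι] {M : Matrix ι ι ℂ}
    (h : M.PosSemidef) : msqrt M * msqrt M = M := by
  have key : ∀ (U D : Matrix ι ι ℂ), star U * U = 1 →
      U * D * star U * (U * D * star U) = U * (D * D) * star U := by
    intro U D hU
    rw [show U * D * star U * (U * D * star U) = U * D * (star U * U) * D * star U by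
      simp only [Matrix.mul_assoc], hU, Matrix.mul_one, Matrix.mul_assoc U D D]
  have hU : star (h.1.eigenvectorUnitary : Matrix ι ι ℂ) * (h.1.eigenvectorUnitary : Matrix ι ι ℂ)
      = 1 := Unitary.coe_star_mul_self _
  rw [msqrt, dif_pos h, key _ _ hU, diagonal_mul_diagonal]
  have hf : (fun i => ((↑) ∘ (√·) ∘ h.1.eigenvalues) i * ((↑) ∘ (√·) ∘ h.1.eigenvalues) i :
      ι → ℂ) = RCLike.ofReal ∘ h.1.eigenvalues := funext fun i => by
    simp only [Function.comp_apply]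
    rw [← Complex.ofReal_mul, Real.mul_self_sqrt (h.eigenvalues_nonneg i)]
    rfl
  rw [hf]
  conv_rhs => rw [h.1.spectral_theorem, Unitary.conjStarAlgAut_apply]

section Aux
variable {ι : Type*} [Fintype ι] [DecidableEq ι]
set_option linter.unusedSectionVars false

lemma aux_trace_inner (U V : Matrix ι ι ℂ) :
    (Uᴴ * V).trace = ∑ p : ι × ι, (starRingEnd ℂ) (U p.1 p.2) * V p.1 p.2 := by
  rw [Matrix.trace, Fintype.sum_prod_type]
  simp only [Matrix.diag, Matrix.mul_apply, Matrix.conjTranspose_apply]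
  exact Finset.sum_comm

lemma aux_trace_self_re (X : Matrix ι ι ℂ) :
    ((Xᴴ * X).trace).re = ∑ p : ι × ι, ‖X p.1 p.2‖ ^ 2 := by
  rw [aux_trace_inner, Complex.re_sum]
  refine Finset.sum_congr rfl fun p _ => ?_
  rw [mul_comm, Complex.mul_conj, Complex.normSq_eq_norm_sq]
  exact Complex.ofReal_re _

lemma aux_frobenius_cs (X Y : Matrix ι ι ℂ) :
    ‖(Xᴴ * Y).trace‖ ≤
      Real.sqrt (((Xᴴ * X).trace).re) * Real.sqrt (((Yᴴ * Y).trace).re) := by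
  rw [aux_trace_inner, aux_trace_self_re, aux_trace_self_re]
  calc ‖∑ p : ι × ι, (starRingEnd ℂ) (X p.1 p.2) * Y p.1 p.2‖
      ≤ ∑ p : ι × ι, ‖(starRingEnd ℂ) (X p.1 p.2) * Y p.1 p.2‖ :=
        (norm_sum_le _ _)
    _ = ∑ p : ι × ι, ‖X p.1 p.2‖ * ‖Y p.1 p.2‖ := by
        refine Finset.sum_congr rfl fun p _ => ?_
        rw [norm_mul, Complex.norm_conj]
    _ ≤ _ := Real.sum_mul_le_sqrt_mul_sqrt _ _ _

lemma aux_psd_trace_re_nonneg {M : Matrix ι ι ℂ} (h : M.PosSemidef) :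
    0 ≤ (M.trace).re := by
  rw [Matrix.trace, Complex.re_sum]
  refine Finset.sum_nonneg fun i _ => ?_
  have hMi : (0 : ℂ) ≤ M i i := h.diag_nonneg
  exact (Complex.le_def.mp hMi).1

lemma aux_trace_mul_psd_nonneg {X Y : Matrix ι ι ℂ} (hX : X.PosSemidef) (hY : Y.PosSemidef) :
    0 ≤ ((X * Y).trace).re := by
  have h1 : X * Y = msqrt X * (msqrt X * Y) := by
    rw [← mul_assoc, msqrt_mul_self hX]
  rw [h1, Matrix.trace_mul_comm]
  have h2 : msqrt X * Y * msqrt X = (msqrt X)ᴴ * Y * msqrt X := by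
    rw [(msqrt_psd hX).1]
  rw [mul_assoc, ← mul_assoc, h2]
  exact aux_psd_trace_re_nonneg (hY.conjTranspose_mul_mul_same _)

lemma aux_proj_psd {Q : Matrix ι ι ℂ} (hH : Qᴴ = Q) (h2 : Q * Q = Q) : Q.PosSemidef := by
  have : Q = Qᴴ * Q := by rw [hH, h2]
  rw [this]
  exact Matrix.posSemidef_conjTranspose_mul_self Q

lemma aux_trace_mul_proj_le {K Q : Matrix ι ι ℂ} (hK : K.PosSemidef)
    (hH : Qᴴ = Q) (h2 : Q * Q = Q) : ((K * Q).trace).re ≤ (K.trace).re := by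
  have hproj : ((1 - Q) : Matrix ι ι ℂ).PosSemidef := by
    refine aux_proj_psd ?_ ?_
    · rw [conjTranspose_sub, conjTranspose_one, hH]
    · rw [sub_mul, mul_sub, mul_sub, h2, one_mul, mul_one]
      simp [mul_one]
  have := aux_trace_mul_psd_nonneg hK hproj
  rw [mul_sub, mul_one, Matrix.trace_sub, Complex.sub_re] at this
  linarith


lemma aux_traceNorm_cs (A B : Matrix ι ι ℂ) :
    traceNorm (Aᴴ * B) ≤
      Real.sqrt (((Aᴴ * A).trace).re) * Real.sqrt (((Bᴴ * B).trace).re) := by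
  set M := Aᴴ * B with hMdef
  have hM : (Mᴴ * M).PosSemidef := Matrix.posSemidef_conjTranspose_mul_self M
  have htn : traceNorm M = ((msqrt (Mᴴ * M)).trace).re := rfl
  set S := msqrt (Mᴴ * M) with hSdef
  have hS : S.PosSemidef := msqrt_psd hM
  have hSH : S.IsHermitian := hS.1
  set V : Matrix ι ι ℂ := (hSH.eigenvectorUnitary : Matrix ι ι ℂ) with hVdef
  set lam : ι → ℝ := hSH.eigenvalues with hlamdef
  have hlam : ∀ i, 0 ≤ lam i := hS.eigenvalues_nonneg
  set D : Matrix ι ι ℂ := Matrix.diagonal (fun i => (lam i : ℂ)) with hDdef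
  have hspec : S = V * D * Vᴴ := by
    have h := hSH.spectral_theorem
    rw [← Matrix.star_eq_conjTranspose]
    exact h
  have hV1 : Vᴴ * V = 1 := by
    rw [← Matrix.star_eq_conjTranspose]
    exact Unitary.coe_star_mul_self hSH.eigenvectorUnitary
  have hV2 : V * Vᴴ = 1 := by
    rw [← Matrix.star_eq_conjTranspose]
    exact Unitary.coe_mul_star_self hSH.eigenvectorUnitary
  have hc1 : ∀ X : Matrix ι ι ℂ, Vᴴ * (V * X) = X := fun X => by
    rw [← Matrix.mul_assoc, hV1, Matrix.one_mul]
  have hc2 : ∀ X : Matrix ι ι ℂ, V * (Vᴴ * X) = X := fun X => by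
    rw [← Matrix.mul_assoc, hV2, Matrix.one_mul]
  have htrS : (S.trace).re = ∑ i, lam i := by
    rw [hspec, Matrix.trace_mul_cycle, hV1, Matrix.one_mul, hDdef,
      Matrix.trace_diagonal, Complex.re_sum]
    simp
  set C := M * V with hCdef
  have hCC : Cᴴ * C = Matrix.diagonal (fun i => (lam i : ℂ) * lam i) := by
    have hMM : Mᴴ * M = S * S := (msqrt_mul_self hM).symm
    have h1 : Cᴴ * C = Vᴴ * ((V * D * Vᴴ) * ((V * D * Vᴴ) * V)) := by
      rw [hCdef, Matrix.conjTranspose_mul]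
      calc Vᴴ * Mᴴ * (M * V) = Vᴴ * ((Mᴴ * M) * V) := by
            simp only [Matrix.mul_assoc]
        _ = _ := by rw [hMM, hspec]; simp only [Matrix.mul_assoc]
    rw [h1]
    simp only [Matrix.mul_assoc, hc1, hc2, hV1, Matrix.mul_one]
    rw [hDdef, Matrix.diagonal_mul_diagonal]
  set mu : ι → ℂ := fun i => if lam i = 0 then (0 : ℂ) else (((lam i)⁻¹ : ℝ) : ℂ) with hmudef
  set W := C * Matrix.diagonal mu with hWdef
  have hmuval : ∀ i, star (mu i) * ((lam i : ℂ) * lam i) = (lam i : ℂ) := by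
    intro i
    by_cases h : lam i = 0
    · simp [hmudef, h]
    · have hne : (lam i : ℂ) ≠ 0 := Complex.ofReal_ne_zero.mpr h
      simp only [hmudef, if_neg h, RCLike.star_def, Complex.conj_ofReal]
      rw [Complex.ofReal_inv]
      field_simp
  have hWC : Wᴴ * C = Matrix.diagonal (fun i => (lam i : ℂ)) := by
    rw [hWdef, Matrix.conjTranspose_mul, Matrix.diagonal_conjTranspose, Matrix.mul_assoc, hCC,
      Matrix.diagonal_mul_diagonal]
    refine congrArg Matrix.diagonal (funext fun i => ?_)
    exact hmuval i
  have hWW : Wᴴ * W = Matrix.diagonal (fun i => if lam i = 0 then (0 : ℂ) else 1) := by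
    rw [hWdef, Matrix.conjTranspose_mul, Matrix.diagonal_conjTranspose]
    have : Cᴴ * (C * Matrix.diagonal mu) = Matrix.diagonal (fun i => (lam i : ℂ) * lam i) *
        Matrix.diagonal mu := by rw [← Matrix.mul_assoc, hCC]
    rw [Matrix.mul_assoc, this, ← Matrix.mul_assoc, Matrix.diagonal_mul_diagonal,
      Matrix.diagonal_mul_diagonal]
    refine congrArg Matrix.diagonal (funext fun i => ?_)
    show star (mu i) * ((lam i : ℂ) * lam i) * mu i = _
    by_cases h : lam i = 0
    · simp [hmudef, h]
    · have hne : (lam i : ℂ) ≠ 0 := Complex.ofReal_ne_zero.mpr h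
      rw [hmuval i]
      simp only [hmudef, if_neg h]
      rw [Complex.ofReal_inv]
      field_simp
  set Q := W * Wᴴ with hQdef
  have hQH : Qᴴ = Q := by rw [hQdef, Matrix.conjTranspose_mul, Matrix.conjTranspose_conjTranspose]
  have hWE : W * Matrix.diagonal (fun i => if lam i = 0 then (0 : ℂ) else 1) = W := by
    rw [hWdef, Matrix.mul_assoc, Matrix.diagonal_mul_diagonal]
    refine congrArg (fun Z => C * Z) (congrArg Matrix.diagonal (funext fun i => ?_))
    by_cases h : lam i = 0 <;> simp [hmudef, h]
  have hQ2 : Q * Q = Q := by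
    rw [hQdef]
    calc W * Wᴴ * (W * Wᴴ) = W * (Wᴴ * W) * Wᴴ := by simp only [Matrix.mul_assoc]
      _ = W * Wᴴ := by rw [hWW, hWE]
  set X := A * W with hXdef
  set Y := B * V with hYdef
  have hXY : Xᴴ * Y = Wᴴ * C := by
    rw [hXdef, hYdef, hCdef, hMdef, Matrix.conjTranspose_mul]
    simp only [Matrix.mul_assoc]
  have htr1 : ((Xᴴ * Y).trace).re = ∑ i, lam i := by
    rw [hXY, hWC, Matrix.trace_diagonal, Complex.re_sum]
    simp
  have hXXle : ((Xᴴ * X).trace).re ≤ ((Aᴴ * A).trace).re := by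
    have h1 : Xᴴ * X = Wᴴ * (Aᴴ * A * W) := by
      rw [hXdef, Matrix.conjTranspose_mul]; simp only [Matrix.mul_assoc]
    rw [h1, Matrix.trace_mul_comm, Matrix.mul_assoc, ← hQdef]
    exact aux_trace_mul_proj_le (Matrix.posSemidef_conjTranspose_mul_self A) hQH hQ2
  have hYY : (Yᴴ * Y).trace = (Bᴴ * B).trace := by
    have h1 : Yᴴ * Y = Vᴴ * (Bᴴ * B * V) := by
      rw [hYdef, Matrix.conjTranspose_mul]; simp only [Matrix.mul_assoc]
    rw [h1, Matrix.trace_mul_comm, Matrix.mul_assoc, hV2, Matrix.mul_one]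
  have hfrob := aux_frobenius_cs X Y
  have hre : ((Xᴴ * Y).trace).re ≤ ‖(Xᴴ * Y).trace‖ := Complex.re_le_norm _
  have hsum : (S.trace).re ≤ Real.sqrt (((Xᴴ * X).trace).re) * Real.sqrt (((Yᴴ * Y).trace).re) := by
    rw [htrS, ← htr1]
    exact le_trans hre hfrob
  rw [htn]
  refine le_trans hsum ?_
  rw [hYY]
  exact mul_le_mul_of_nonneg_right (Real.sqrt_le_sqrt hXXle) (Real.sqrt_nonneg _)

end Aux

/-- **Hölder step for root fidelity**: for positive semidefinite `ρ, γ` and an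
orthogonal projection `P`, `‖√ρ · P · √γ‖₁ ≤ √(tr(Pρ)) · √(tr(Pγ))`,
the traces being nonnegative reals. -/
theorem holder_step_root_fidelity {ι : Type*} [Fintype ι] [DecidableEq ι] [Nonempty ι]
    (ρ γ P : Matrix ι ι ℂ) (hρ : ρ.PosSemidef) (hγ : γ.PosSemidef)
    (hP : Pᴴ = P) (hP2 : P * P = P) :
    0 ≤ ((P * ρ).trace).re ∧ 0 ≤ ((P * γ).trace).re ∧
    traceNorm (msqrt ρ * P * msqrt γ) ≤
      Real.sqrt (((P * ρ).trace).re) * Real.sqrt (((P * γ).trace).re) := by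
  have hPpsd : P.PosSemidef := by
    have h : P = Pᴴ * P := by rw [hP, hP2]
    rw [h]; exact Matrix.posSemidef_conjTranspose_mul_self P
  refine ⟨aux_trace_mul_psd_nonneg hPpsd hρ, aux_trace_mul_psd_nonneg hPpsd hγ, ?_⟩
  have hρH : (msqrt ρ)ᴴ = msqrt ρ := (msqrt_psd hρ).1
  have hγH : (msqrt γ)ᴴ = msqrt γ := (msqrt_psd hγ).1
  have hss : msqrt ρ * msqrt ρ = ρ := msqrt_mul_self hρ
  have hssγ : msqrt γ * msqrt γ = γ := msqrt_mul_self hγ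
  set A := P * msqrt ρ with hA
  set B := P * msqrt γ with hB
  have hAB : Aᴴ * B = msqrt ρ * P * msqrt γ := by
    rw [hA, hB, Matrix.conjTranspose_mul, hρH, hP]
    calc msqrt ρ * P * (P * msqrt γ) = msqrt ρ * (P * P * msqrt γ) := by
          simp only [Matrix.mul_assoc]
      _ = _ := by rw [hP2, ← Matrix.mul_assoc]
  have hAA : ((Aᴴ * A).trace) = ((P * ρ).trace) := by
    have h1 : Aᴴ * A = msqrt ρ * (P * msqrt ρ) := by
      rw [hA, Matrix.conjTranspose_mul, hρH, hP]
      calc msqrt ρ * P * (P * msqrt ρ) = msqrt ρ * (P * P * msqrt ρ) := by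
            simp only [Matrix.mul_assoc]
        _ = _ := by rw [hP2]
    rw [h1, Matrix.trace_mul_comm, Matrix.mul_assoc, hss]
  have hBB : ((Bᴴ * B).trace) = ((P * γ).trace) := by
    have h1 : Bᴴ * B = msqrt γ * (P * msqrt γ) := by
      rw [hB, Matrix.conjTranspose_mul, hγH, hP]
      calc msqrt γ * P * (P * msqrt γ) = msqrt γ * (P * P * msqrt γ) := by
            simp only [Matrix.mul_assoc]
        _ = _ := by rw [hP2]
    rw [h1, Matrix.trace_mul_comm, Matrix.mul_assoc, hssγ]
  have h := aux_traceNorm_cs A B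
  rw [hAB, hAA, hBB] at h
  exact h
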